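/- Bounds on one-loop anomalous dimensions: suppose ε ≥ 0, β^y_i(y) = 0 for all i, and the quartic positivity assumption Σ_{i,j} [Tr((y_i ȳ_j + y_j ȳ_i)(y_i ȳ_j + y_j ȳ_i)) − Tr(y_i ȳ_j y_j ȳ_i)] ≥ 0 holds. Define the scalar anomalous dimension matrix γ^φ = (1/2) Z (an Ns × Ns real symmetric matrix) and the fermion anomalous dimension matrix γ^ψ = (1/2) Σ_i y_i ȳ_i (an Nf × Nf positive semidefinite Hermitian matrix). Then every eigenvalue of γ^φ lies in the interval [0, (1/2) Ns ε] and every eigenvalue of γ^ψ lies in the interval [0, Ns ε]. -/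

import Mathlib

open Matrix

noncomputable section

/-- Entrywise complex conjugate of a matrix. -/
def mconj {Nf : ℕ} (A : Matrix (Fin Nf) (Fin Nf) ℂ) : Matrix (Fin Nf) (Fin Nf) ℂ :=
  A.map (starRingEnd ℂ)

/-- `Z_{ij} = Tr(y_i ȳ_j + ȳ_i y_j)` (a real number). -/
def Zw {Ns Nf : ℕ} (y : Fin Ns → Matrix (Fin Nf) (Fin Nf) ℂ) (i j : Fin Ns) : ℝ :=
  (Matrix.trace (y i * mconj (y j) + mconj (y i) * y j)).re

/-- `X_{ijkl} = (1/4) Σ_σ Tr(y_{σ(i)} ȳ_{σ(j)} y_{σ(k)} ȳ_{σ(l)})`,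
summing over all 24 permutations of the index list `(i,j,k,l)`. -/
def Xw {Ns Nf : ℕ} (y : Fin Ns → Matrix (Fin Nf) (Fin Nf) ℂ) (i j k l : Fin Ns) : ℝ :=
  (1 / 4) * (∑ σ : Equiv.Perm (Fin 4),
    Matrix.trace (y (![i, j, k, l] (σ 0)) * mconj (y (![i, j, k, l] (σ 1))) *
      (y (![i, j, k, l] (σ 2)) * mconj (y (![i, j, k, l] (σ 3)))))).re

/-- Full permutation symmetry of the quartic coupling tensor. -/
def FullySymm {Ns : ℕ} (lam : Fin Ns → Fin Ns → Fin Ns → Fin Ns → ℝ) : Prop :=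
  ∀ i j k l, lam i j k l = lam j i k l ∧ lam i j k l = lam i k j l ∧
    lam i j k l = lam i j l k

/-- One-loop quartic beta function for Weyl fermions (α = 2). -/
def betaLamW {Ns Nf : ℕ} (ε : ℝ) (lam : Fin Ns → Fin Ns → Fin Ns → Fin Ns → ℝ)
    (y : Fin Ns → Matrix (Fin Nf) (Fin Nf) ℂ) (i j k l : Fin Ns) : ℝ :=
  -ε * lam i j k l
    + ∑ m, ∑ n, (lam i j m n * lam m n k l + lam i k m n * lam m n j l
        + lam i l m n * lam m n j k)
    - 4 * Xw y i j k l
    + (1 / 2) * ∑ m, (Zw y i m * lam m j k l + Zw y j m * lam i m k l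
        + Zw y k m * lam i j m l + Zw y l m * lam i j k m)

/-- One-loop Yukawa beta function for Weyl fermions (α = 2). -/
def betaYW {Ns Nf : ℕ} (ε : ℝ) (y : Fin Ns → Matrix (Fin Nf) (Fin Nf) ℂ) (i : Fin Ns) :
    Matrix (Fin Nf) (Fin Nf) ℂ :=
  (-(1 / 2) * (ε : ℂ)) • y i
    + (1 / 2 : ℂ) • ∑ j, (y j * mconj (y j) * y i + y i * mconj (y j) * y j
        + (4 : ℂ) • (y j * mconj (y i) * y j))
    + (1 / 2 : ℂ) • ∑ j, ((Zw y i j : ℂ) • y j)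

/-- `a₀ = λ_{iijj}`. -/
def a0inv {Ns : ℕ} (lam : Fin Ns → Fin Ns → Fin Ns → Fin Ns → ℝ) : ℝ :=
  ∑ i, ∑ j, lam i i j j

/-- `a₁ = λ_{iimn} λ_{jjmn}`. -/
def a1inv {Ns : ℕ} (lam : Fin Ns → Fin Ns → Fin Ns → Fin Ns → ℝ) : ℝ :=
  ∑ m, ∑ n, (∑ i, lam i i m n) * (∑ j, lam j j m n)

/-- `S = λ_{ijkl} λ_{ijkl} = ‖λ‖²`. -/
def Sinv {Ns : ℕ} (lam : Fin Ns → Fin Ns → Fin Ns → Fin Ns → ℝ) : ℝ :=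
  ∑ i, ∑ j, ∑ k, ∑ l, lam i j k l ^ 2

/-- `b₀ = Z_{ii}`. -/
def b0inv {Ns Nf : ℕ} (y : Fin Ns → Matrix (Fin Nf) (Fin Nf) ℂ) : ℝ :=
  ∑ i, Zw y i i

/-- `b₁ = Z_{ij} Z_{ij} − b₀²/Ns`. -/
def b1inv {Ns Nf : ℕ} (y : Fin Ns → Matrix (Fin Nf) (Fin Nf) ℂ) : ℝ :=
  (∑ i, ∑ j, Zw y i j ^ 2) - b0inv y ^ 2 / (Ns : ℝ)

/-- `b₂ = Σ_{i,j} (λ_{ijkk} − (a₀/Ns) δ_{ij} + Z_{ij} − (b₀/Ns) δ_{ij})²`. -/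
def b2inv {Ns Nf : ℕ} (lam : Fin Ns → Fin Ns → Fin Ns → Fin Ns → ℝ)
    (y : Fin Ns → Matrix (Fin Nf) (Fin Nf) ℂ) : ℝ :=
  ∑ i, ∑ j, ((∑ k, lam i j k k) - (a0inv lam / (Ns : ℝ)) * (if i = j then 1 else 0)
      + Zw y i j - (b0inv y / (Ns : ℝ)) * (if i = j then 1 else 0)) ^ 2

/-- `b₃ = X_{iijj}`. -/
def b3inv {Ns Nf : ℕ} (y : Fin Ns → Matrix (Fin Nf) (Fin Nf) ℂ) : ℝ :=
  ∑ i, ∑ j, Xw y i i j j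

/-- `Y = Tr(y_i ȳ_i y_j ȳ_j) = ‖y_i ȳ_i‖²`. -/
def Yinv {Ns Nf : ℕ} (y : Fin Ns → Matrix (Fin Nf) (Fin Nf) ℂ) : ℝ :=
  (∑ i, ∑ j, Matrix.trace (y i * mconj (y i) * (y j * mconj (y j)))).re

/-- `b̃₀ = a₀ b₀ / Ns`. -/
def btilde0 {Ns Nf : ℕ} (lam : Fin Ns → Fin Ns → Fin Ns → Fin Ns → ℝ)
    (y : Fin Ns → Matrix (Fin Nf) (Fin Nf) ℂ) : ℝ :=
  a0inv lam * b0inv y / (Ns : ℝ)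

/-- The `A`-function `A_y(λ)` generating the one-loop quartic beta function. -/
def Afun {Ns Nf : ℕ} (ε : ℝ) (lam : Fin Ns → Fin Ns → Fin Ns → Fin Ns → ℝ)
    (y : Fin Ns → Matrix (Fin Nf) (Fin Nf) ℂ) : ℝ :=
  -(1 / 2) * ε * (∑ i, ∑ j, ∑ k, ∑ l, lam i j k l * lam i j k l)
    + (∑ i, ∑ j, ∑ k, ∑ l, ∑ m, ∑ n, lam i j k l * lam k l m n * lam m n i j)
    - 4 * (∑ i, ∑ j, ∑ k, ∑ l, Xw y i j k l * lam i j k l)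
    + (∑ i, ∑ j, ∑ k, ∑ l, ∑ m, Zw y i j * lam i k l m * lam j k l m)

lemma triple_swap {n : ℕ} {ι : Type*} [Fintype ι] (F : Fin n → Fin n → ι → ℝ) :
    ∑ i, ∑ j, ∑ a, F i j a = ∑ a, ∑ i, ∑ j, F i j a :=
  calc ∑ i, ∑ j, ∑ a, F i j a = ∑ i, ∑ a, ∑ j, F i j a :=
        Finset.sum_congr rfl fun i _ => Finset.sum_comm
    _ = ∑ a, ∑ i, ∑ j, F i j a := Finset.sum_comm


lemma gram_eig_real {n : ℕ} {ι : Type*} [Fintype ι] (w : Fin n → ι → ℝ)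
    (μ : ℝ) (v : Fin n → ℝ) (hv : v ≠ 0)
    (h : (Matrix.of fun i j => ∑ a, w i a * w j a).mulVec v = μ • v) :
    0 ≤ μ ∧ μ ≤ ∑ i, ∑ a, w i a * w i a := by
  have hc : 0 < ∑ i, v i ^ 2 := by
    have hex : ∃ i, v i ≠ 0 := by
      by_contra hcon; push_neg at hcon; exact hv (funext fun i => hcon i)
    obtain ⟨i0, hi0⟩ := hex
    have h0 : 0 < v i0 ^ 2 := by positivity
    exact lt_of_lt_of_le h0 (Finset.single_le_sum (fun i _ => sq_nonneg (v i))
      (Finset.mem_univ i0))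
  have key : ∑ i, v i * ((Matrix.of fun i j => ∑ a, w i a * w j a).mulVec v i)
      = ∑ a, (∑ i, v i * w i a) ^ 2 := by
    simp only [Matrix.mulVec, dotProduct, Matrix.of_apply, Finset.mul_sum,
      Finset.sum_mul]
    rw [show (∑ i, ∑ j, ∑ a, v i * (w i a * w j a * v j))
        = ∑ a, ∑ i, ∑ j, v i * (w i a * w j a * v j) from triple_swap _]
    refine Finset.sum_congr rfl fun a _ => ?_
    rw [sq, Finset.sum_mul_sum]
    exact Finset.sum_congr rfl fun i _ => Finset.sum_congr rfl fun j _ => by ring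
  have key2 : ∑ i, v i * ((Matrix.of fun i j => ∑ a, w i a * w j a).mulVec v i)
      = μ * ∑ i, v i ^ 2 := by
    rw [h]; simp only [Pi.smul_apply, smul_eq_mul, Finset.mul_sum]
    exact Finset.sum_congr rfl fun i _ => by ring
  have hquad : μ * ∑ i, v i ^ 2 = ∑ a, (∑ i, v i * w i a) ^ 2 := by rw [← key2, key]
  have hnn : 0 ≤ μ * ∑ i, v i ^ 2 := by
    rw [hquad]; exact Finset.sum_nonneg fun a _ => sq_nonneg _
  constructor
  · exact nonneg_of_mul_nonneg_right (by rwa [mul_comm] at hnn) hc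
  · have hCS : ∑ a, (∑ i, v i * w i a) ^ 2
        ≤ (∑ i, v i ^ 2) * (∑ i, ∑ a, w i a * w i a) := by
      have : ∀ a, (∑ i, v i * w i a) ^ 2 ≤ (∑ i, v i ^ 2) * (∑ i, w i a ^ 2) :=
        fun a => Finset.sum_mul_sq_le_sq_mul_sq _ _ _
      calc ∑ a, (∑ i, v i * w i a) ^ 2 ≤ ∑ a, (∑ i, v i ^ 2) * (∑ i, w i a ^ 2) :=
            Finset.sum_le_sum fun a _ => this a
        _ = (∑ i, v i ^ 2) * (∑ i, ∑ a, w i a * w i a) := by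
            rw [← Finset.mul_sum, Finset.sum_comm]
            congr 1
            exact Finset.sum_congr rfl fun i _ => Finset.sum_congr rfl fun a _ => (sq _)
    have := hquad.le.trans hCS
    rw [mul_comm μ _] at this
    exact le_of_mul_le_mul_left this hc

lemma triple_swapC {n : ℕ} {ι : Type*} [Fintype ι] (F : Fin n → Fin n → ι → ℂ) :
    ∑ i, ∑ j, ∑ a, F i j a = ∑ a, ∑ i, ∑ j, F i j a :=
  calc ∑ i, ∑ j, ∑ a, F i j a = ∑ i, ∑ a, ∑ j, F i j a :=
        Finset.sum_congr rfl fun _ _ => Finset.sum_comm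
    _ = ∑ a, ∑ i, ∑ j, F i j a := Finset.sum_comm

lemma gram_eig_complex {n : ℕ} {ι : Type*} [Fintype ι] (B : Fin n → ι → ℂ)
    (μ : ℂ) (v : Fin n → ℂ) (hv : v ≠ 0)
    (h : (Matrix.of fun a b => ∑ k, B a k * (starRingEnd ℂ) (B b k)).mulVec v = μ • v) :
    μ.im = 0 ∧ 0 ≤ μ.re ∧ μ.re ≤ ∑ a, ∑ k, Complex.normSq (B a k) := by
  set c : ℝ := ∑ a, Complex.normSq (v a) with hcdef
  have hc : 0 < c := by
    have hex : ∃ a, v a ≠ 0 := by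
      by_contra hcon; push_neg at hcon; exact hv (funext fun a => hcon a)
    obtain ⟨a0, ha0⟩ := hex
    have h0 : 0 < Complex.normSq (v a0) := Complex.normSq_pos.2 ha0
    exact lt_of_lt_of_le h0 (Finset.single_le_sum
      (fun a _ => Complex.normSq_nonneg (v a)) (Finset.mem_univ a0))
  set u : ι → ℂ := fun k => ∑ a, (starRingEnd ℂ) (v a) * B a k with hudef
  have key : ∑ a, (starRingEnd ℂ) (v a)
        * ((Matrix.of fun a b => ∑ k, B a k * (starRingEnd ℂ) (B b k)).mulVec v a)
      = ∑ k, (Complex.normSq (u k) : ℂ) := by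
    simp only [Matrix.mulVec, dotProduct, Matrix.of_apply, Finset.mul_sum,
      Finset.sum_mul]
    rw [triple_swapC (fun a b k => (starRingEnd ℂ) (v a) * (B a k * (starRingEnd ℂ) (B b k) * v b))]
    refine Finset.sum_congr rfl fun k _ => ?_
    rw [← Complex.mul_conj (u k), hudef]
    simp only [map_sum, _root_.map_mul, Complex.conj_conj, Finset.sum_mul_sum]
    exact Finset.sum_congr rfl fun a _ => Finset.sum_congr rfl fun b _ => by ring
  have key2 : ∑ a, (starRingEnd ℂ) (v a)
        * ((Matrix.of fun a b => ∑ k, B a k * (starRingEnd ℂ) (B b k)).mulVec v a)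
      = μ * (c : ℂ) := by
    rw [h, hcdef]
    simp only [Pi.smul_apply, smul_eq_mul, Complex.ofReal_sum,
      Complex.normSq_eq_conj_mul_self, Finset.mul_sum]
    exact Finset.sum_congr rfl fun a _ => by ring
  have hqc : μ * (c : ℂ) = ((∑ k, Complex.normSq (u k) : ℝ) : ℂ) := by
    rw [← key2, key]; push_cast; rfl
  have him : μ.im = 0 := by
    have := congrArg Complex.im hqc
    simp at this
    rcases this with h1 | h2
    · exact h1
    · exact absurd h2 (ne_of_gt hc)
  have hre : μ.re * c = ∑ k, Complex.normSq (u k) := by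
    have := congrArg Complex.re hqc
    simpa [him] using this
  refine ⟨him, ?_, ?_⟩
  · have : 0 ≤ μ.re * c := hre ▸ Finset.sum_nonneg fun k _ => Complex.normSq_nonneg _
    exact nonneg_of_mul_nonneg_right (by rwa [mul_comm] at this) hc
  · have hCS : ∑ k, Complex.normSq (u k) ≤ c * ∑ a, ∑ k, Complex.normSq (B a k) := by
      have hk : ∀ k, Complex.normSq (u k) ≤ c * ∑ a, Complex.normSq (B a k) := by
        intro k
        have h1 : ‖u k‖ ≤ ∑ a, ‖v a‖ * ‖B a k‖ := by
          refine (norm_sum_le _ _).trans (le_of_eq ?_)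
          exact Finset.sum_congr rfl fun a _ => by
            rw [norm_mul, RCLike.norm_conj]
        have h2 : ‖u k‖ ^ 2 ≤ (∑ a, ‖v a‖ * ‖B a k‖) ^ 2 :=
          pow_le_pow_left₀ (norm_nonneg _) h1 2
        have h3 : (∑ a, ‖v a‖ * ‖B a k‖) ^ 2 ≤ (∑ a, ‖v a‖ ^ 2) * ∑ a, ‖B a k‖ ^ 2 :=
          Finset.sum_mul_sq_le_sq_mul_sq _ _ _
        have h4 : Complex.normSq (u k) = ‖u k‖ ^ 2 := by
          rw [Complex.sq_norm]
        have h5 : (∑ a, ‖v a‖ ^ 2) = c := by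
          rw [hcdef]
          exact Finset.sum_congr rfl fun a _ => by
            rw [Complex.sq_norm]
        have h6 : (∑ a, ‖B a k‖ ^ 2) = ∑ a, Complex.normSq (B a k) :=
          Finset.sum_congr rfl fun a _ => by rw [Complex.sq_norm]
        rw [h4]
        calc ‖u k‖ ^ 2 ≤ (∑ a, ‖v a‖ ^ 2) * ∑ a, ‖B a k‖ ^ 2 := h2.trans h3
          _ = c * ∑ a, Complex.normSq (B a k) := by rw [h5, h6]
      calc ∑ k, Complex.normSq (u k) ≤ ∑ k, c * ∑ a, Complex.normSq (B a k) :=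
            Finset.sum_le_sum fun k _ => hk k
        _ = c * ∑ a, ∑ k, Complex.normSq (B a k) := by
            rw [← Finset.mul_sum, Finset.sum_comm]
    have h2 : μ.re * c ≤ c * ∑ a, ∑ k, Complex.normSq (B a k) := hre ▸ hCS
    rw [mul_comm] at h2
    exact le_of_mul_le_mul_left h2 hc

variable {Ns Nf : ℕ}

lemma mconj_mul (A B : Matrix (Fin Nf) (Fin Nf) ℂ) : mconj (A * B) = mconj A * mconj B := by
  simp [mconj, Matrix.map_mul]

lemma mconj_mconj (A : Matrix (Fin Nf) (Fin Nf) ℂ) : mconj (mconj A) = A := by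
  ext a b; simp [mconj]

lemma trace_mconj (A : Matrix (Fin Nf) (Fin Nf) ℂ) :
    (mconj A).trace = (starRingEnd ℂ) A.trace := by
  simp [mconj, Matrix.trace, Matrix.diag, map_sum]

lemma re_trace_mconj (A : Matrix (Fin Nf) (Fin Nf) ℂ) :
    ((mconj A).trace).re = (A.trace).re := by
  rw [trace_mconj]; simp

-- re of trace(c_i y_j) equals Zw/2
lemma re_trace_cy (y : Fin Ns → Matrix (Fin Nf) (Fin Nf) ℂ) (i j : Fin Ns) :
    ((mconj (y i) * y j).trace).re = Zw y i j / 2 := by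
  have h1 : ((y i * mconj (y j)).trace).re = ((mconj (y i) * y j).trace).re := by
    rw [← re_trace_mconj (y i * mconj (y j)), mconj_mul, mconj_mconj]
  have : Zw y i j = ((y i * mconj (y j)).trace).re + ((mconj (y i) * y j).trace).re := by
    simp [Zw, Matrix.trace_add]
  rw [this, h1]; ring

-- expansion of trace(c_i * betaYW)
lemma trace_beta_expand (ε : ℝ) (y : Fin Ns → Matrix (Fin Nf) (Fin Nf) ℂ) (i : Fin Ns) :
    Matrix.trace (mconj (y i) * betaYW ε y i)
      = (-(1/2) * (ε:ℂ)) * Matrix.trace (mconj (y i) * y i)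
        + (1/2) * ∑ j, (Matrix.trace (mconj (y i) * (y j * mconj (y j) * y i))
            + Matrix.trace (mconj (y i) * (y i * mconj (y j) * y j))
            + 4 * Matrix.trace (mconj (y i) * (y j * mconj (y i) * y j)))
        + (1/2) * ∑ j, (Zw y i j : ℂ) * Matrix.trace (mconj (y i) * y j) := by
  simp only [betaYW, Matrix.mul_add, Matrix.mul_smul, Matrix.mul_sum, Matrix.trace_add,
    Matrix.trace_smul, Matrix.trace_sum, smul_eq_mul, mul_add, Finset.mul_sum]

-- cyclic identities at the level of re-traces
lemma re_tr_cyc1 (y : Fin Ns → Matrix (Fin Nf) (Fin Nf) ℂ) (i j : Fin Ns) :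
    ((mconj (y i) * (y j * mconj (y j) * y i)).trace).re
      = ((y j * mconj (y j) * (y i * mconj (y i))).trace).re := by
  rw [Matrix.trace_mul_comm]
  congr 2
  noncomm_ring

lemma re_tr_cyc2 (y : Fin Ns → Matrix (Fin Nf) (Fin Nf) ℂ) (i j : Fin Ns) :
    ((mconj (y i) * (y i * mconj (y j) * y j)).trace).re
      = ((y i * mconj (y i) * (y j * mconj (y j))).trace).re := by
  rw [← re_trace_mconj (mconj (y i) * (y i * mconj (y j) * y j))]
  simp only [mconj_mul, mconj_mconj]
  congr 2
  noncomm_ring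

lemma re_tr_cyc3 (y : Fin Ns → Matrix (Fin Nf) (Fin Nf) ℂ) (i j : Fin Ns) :
    ((mconj (y i) * (y j * mconj (y i) * y j)).trace).re
      = ((y i * mconj (y j) * (y i * mconj (y j))).trace).re := by
  rw [← re_trace_mconj (mconj (y i) * (y j * mconj (y i) * y j))]
  simp only [mconj_mul, mconj_mconj]
  congr 2
  noncomm_ring

-- A*B cyclic to type-2 form
lemma re_tr_AB (y : Fin Ns → Matrix (Fin Nf) (Fin Nf) ℂ) (i j : Fin Ns) :
    ((y i * mconj (y j) * (y j * mconj (y i))).trace).re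
      = ((y i * mconj (y i) * (y j * mconj (y j))).trace).re := by
  have h1 : y i * mconj (y j) * (y j * mconj (y i))
      = (y i * mconj (y j) * y j) * mconj (y i) := by noncomm_ring
  rw [h1, Matrix.trace_mul_comm]
  exact re_tr_cyc2 y i j

def Tq {Ns Nf : ℕ} (y : Fin Ns → Matrix (Fin Nf) (Fin Nf) ℂ) : ℝ :=
  ∑ i, ∑ j, ((y i * mconj (y j) * (y i * mconj (y j))).trace).re

lemma master_identity (ε : ℝ) (y : Fin Ns → Matrix (Fin Nf) (Fin Nf) ℂ)
    (hfp : ∀ i, betaYW ε y i = 0) :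
    ε * b0inv y = 4 * Yinv y + 8 * Tq y + ∑ i, ∑ j, Zw y i j ^ 2 := by
  have h0 : ∀ i, (Matrix.trace (mconj (y i) * betaYW ε y i)).re = 0 := fun i => by
    rw [hfp i, Matrix.mul_zero, Matrix.trace_zero]; rfl
  have hre : ∀ i, (0:ℝ) = -(1/2) * ε * (Zw y i i / 2)
      + (1/2) * ∑ j, (((y j * mconj (y j) * (y i * mconj (y i))).trace).re
          + ((y i * mconj (y i) * (y j * mconj (y j))).trace).re
          + 4 * ((y i * mconj (y j) * (y i * mconj (y j))).trace).re)
      + (1/2) * ∑ j, Zw y i j * (Zw y i j / 2) := by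
    intro i
    have := h0 i
    rw [trace_beta_expand] at this
    rw [← this]
    simp only [show (-(1/2) * (ε:ℂ)) = ((-(1/2) * ε : ℝ) : ℂ) by push_cast; ring,
      show ((1:ℂ)/2) = ((1/2:ℝ):ℂ) by norm_num,
      show ((4:ℂ)) = ((4:ℝ):ℂ) by norm_num,
      ← Complex.ofReal_neg, ← Complex.ofReal_mul,
      Complex.re_ofReal_mul, Complex.add_re, Complex.re_sum,
      re_trace_cy, re_tr_cyc1, re_tr_cyc2, re_tr_cyc3]
  have hzero : (0:ℝ) = ∑ i, (-(1/2) * ε * (Zw y i i / 2)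
      + (1/2) * ∑ j, (((y j * mconj (y j) * (y i * mconj (y i))).trace).re
          + ((y i * mconj (y i) * (y j * mconj (y j))).trace).re
          + 4 * ((y i * mconj (y j) * (y i * mconj (y j))).trace).re)
      + (1/2) * ∑ j, Zw y i j * (Zw y i j / 2)) :=
    calc (0:ℝ) = ∑ _i : Fin Ns, (0:ℝ) := by simp
      _ = _ := Finset.sum_congr rfl fun i _ => hre i
  have hA : ∑ i, ∑ j, ((y j * mconj (y j) * (y i * mconj (y i))).trace).re
      = ∑ i, ∑ j, ((y i * mconj (y i) * (y j * mconj (y j))).trace).re :=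
    Finset.sum_comm
  have hY : Yinv y = ∑ i, ∑ j, ((y i * mconj (y i) * (y j * mconj (y j))).trace).re := by
    rw [Yinv]; simp [Complex.re_sum]
  simp only [Finset.sum_add_distrib, ← Finset.mul_sum, mul_div_assoc,
    ← Finset.sum_div] at hzero
  rw [hY]
  simp only [Tq, b0inv, pow_two]
  simp only [← mul_div_assoc, ← Finset.sum_div] at hzero
  linarith [hzero, hA]

lemma pos_comb (y : Fin Ns → Matrix (Fin Nf) (Fin Nf) ℂ)
    (hpos : 0 ≤ (∑ i, ∑ j,
        (Matrix.trace ((y i * mconj (y j) + y j * mconj (y i)) *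
            (y i * mconj (y j) + y j * mconj (y i)))
          - Matrix.trace (y i * mconj (y j) * (y j * mconj (y i))))).re) :
    0 ≤ 2 * Tq y + Yinv y := by
  have hexp : (∑ i, ∑ j,
        (Matrix.trace ((y i * mconj (y j) + y j * mconj (y i)) *
            (y i * mconj (y j) + y j * mconj (y i)))
          - Matrix.trace (y i * mconj (y j) * (y j * mconj (y i))))).re
      = ∑ i, ∑ j, (((y i * mconj (y j) * (y i * mconj (y j))).trace).re
          + ((y j * mconj (y i) * (y j * mconj (y i))).trace).re
          + ((y j * mconj (y j) * (y i * mconj (y i))).trace).re) := by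
    rw [Complex.re_sum]
    refine Finset.sum_congr rfl fun i _ => ?_
    rw [Complex.re_sum]
    refine Finset.sum_congr rfl fun j _ => ?_
    simp only [Matrix.add_mul, Matrix.mul_add, Matrix.trace_add, Complex.add_re,
      Complex.sub_re, re_tr_AB]
    have hBA : ((y j * mconj (y i) * (y i * mconj (y j))).trace).re
        = ((y j * mconj (y j) * (y i * mconj (y i))).trace).re := re_tr_AB y j i
    rw [hBA]
    ring
  rw [hexp] at hpos
  have h1 : ∑ i, ∑ j, (((y i * mconj (y j) * (y i * mconj (y j))).trace).re
          + ((y j * mconj (y i) * (y j * mconj (y i))).trace).re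
          + ((y j * mconj (y j) * (y i * mconj (y i))).trace).re)
      = 2 * Tq y + Yinv y := by
    simp only [Finset.sum_add_distrib]
    have e1 : ∑ i, ∑ j, ((y j * mconj (y i) * (y j * mconj (y i))).trace).re
        = Tq y := by rw [Tq]; exact Finset.sum_comm
    have e2 : ∑ i, ∑ j, ((y j * mconj (y j) * (y i * mconj (y i))).trace).re
        = Yinv y := by
      rw [Yinv]; simp only [Complex.re_sum]; exact Finset.sum_comm
    rw [e1, e2, Tq]
    ring
  linarith [hpos, h1.symm ▸ hpos]

lemma re_trace_entry (y : Fin Ns → Matrix (Fin Nf) (Fin Nf) ℂ)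
    (hy : ∀ i, (y i)ᵀ = y i) (i j : Fin Ns) :
    ((mconj (y i) * y j).trace).re
      = ∑ a, ∑ b, ((y i a b).re * (y j a b).re + (y i a b).im * (y j a b).im) := by
  simp only [Matrix.trace, Matrix.diag, Matrix.mul_apply, mconj, Matrix.map_apply,
    Complex.re_sum]
  refine Finset.sum_congr rfl fun a _ => Finset.sum_congr rfl fun b _ => ?_
  have hj : y j b a = y j a b := congrFun (congrFun (hy j) a) b
  rw [hj]
  simp only [Complex.mul_re, Complex.conj_re, Complex.conj_im]
  ring

lemma Zw_diag_nonneg (y : Fin Ns → Matrix (Fin Nf) (Fin Nf) ℂ)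
    (hy : ∀ i, (y i)ᵀ = y i) (i : Fin Ns) : 0 ≤ Zw y i i := by
  have h := re_trace_cy y i i
  have h2 := re_trace_entry y hy i i
  have : Zw y i i = 2 * ∑ a, ∑ b, ((y i a b).re * (y i a b).re
      + (y i a b).im * (y i a b).im) := by rw [← h2, h]; ring
  rw [this]
  have : 0 ≤ ∑ a, ∑ b, ((y i a b).re * (y i a b).re + (y i a b).im * (y i a b).im) :=
    Finset.sum_nonneg fun a _ => Finset.sum_nonneg fun b _ =>
      add_nonneg (mul_self_nonneg _) (mul_self_nonneg _)
  linarith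

lemma b0_le_Nse (ε : ℝ) (hε : 0 ≤ ε) (y : Fin Ns → Matrix (Fin Nf) (Fin Nf) ℂ)
    (hy : ∀ i, (y i)ᵀ = y i) (hfp : ∀ i, betaYW ε y i = 0)
    (hpos : 0 ≤ (∑ i, ∑ j,
        (Matrix.trace ((y i * mconj (y j) + y j * mconj (y i)) *
            (y i * mconj (y j) + y j * mconj (y i)))
          - Matrix.trace (y i * mconj (y j) * (y j * mconj (y i))))).re) :
    b0inv y ≤ Ns * ε := by
  have hb0 : 0 ≤ b0inv y := Finset.sum_nonneg fun i _ => Zw_diag_nonneg y hy i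
  have hmain := master_identity ε y hfp
  have hTY := pos_comb y hpos
  have hZb : ε * b0inv y ≥ ∑ i, ∑ j, Zw y i j ^ 2 := by linarith
  have step1 : ∑ i, Zw y i i ^ 2 ≤ ∑ i, ∑ j, Zw y i j ^ 2 :=
    Finset.sum_le_sum fun i _ => Finset.single_le_sum
      (fun j _ => sq_nonneg (Zw y i j)) (Finset.mem_univ i)
  have step2 : (b0inv y) ^ 2 ≤ (Ns : ℝ) * ∑ i, Zw y i i ^ 2 := by
    have := sq_sum_le_card_mul_sum_sq (s := Finset.univ) (f := fun i => Zw y i i)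
    simpa [b0inv] using this
  rcases eq_or_lt_of_le hb0 with heq | hlt
  · rw [← heq]; positivity
  · nlinarith [step2, step1, hZb, hlt]


/-- Bounds on one-loop anomalous dimensions: assuming `ε ≥ 0`, the Yukawa fixed-point
equation, and the quartic positivity assumption, every eigenvalue of
`γ^φ = (1/2) Z` lies in `[0, (1/2) Ns ε]` and every eigenvalue of
`γ^ψ = (1/2) Σ_i y_i ȳ_i` lies in `[0, Ns ε]`. -/
theorem anomalous_dimension_bounds {Ns Nf : ℕ} (hNs : 1 ≤ Ns) (hNf : 1 ≤ Nf)
    (ε : ℝ) (hε : 0 ≤ ε) (y : Fin Ns → Matrix (Fin Nf) (Fin Nf) ℂ)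
    (hy : ∀ i, (y i)ᵀ = y i)
    (hfp : ∀ i, betaYW ε y i = 0)
    (hpos : 0 ≤ (∑ i, ∑ j,
        (Matrix.trace ((y i * mconj (y j) + y j * mconj (y i)) *
            (y i * mconj (y j) + y j * mconj (y i)))
          - Matrix.trace (y i * mconj (y j) * (y j * mconj (y i))))).re) :
    (∀ (μ : ℝ) (v : Fin Ns → ℝ), v ≠ 0 →
        (Matrix.of fun i j => (1 / 2) * Zw y i j).mulVec v = μ • v →
        0 ≤ μ ∧ μ ≤ (1 / 2) * (Ns : ℝ) * ε)
    ∧ (∀ (μ : ℂ) (v : Fin Nf → ℂ), v ≠ 0 →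
        ((1 / 2 : ℂ) • ∑ i, y i * mconj (y i)).mulVec v = μ • v →
        μ.im = 0 ∧ 0 ≤ μ.re ∧ μ.re ≤ (Ns : ℝ) * ε) := by
  have hb0le : b0inv y ≤ Ns * ε := b0_le_Nse ε hε y hy hfp hpos
  have hNse : (0:ℝ) ≤ (Ns:ℝ) * ε := by positivity
  constructor
  · intro μ v hv h
    set w : Fin Ns → (Fin Nf × Fin Nf × Bool) → ℝ :=
      fun i p => if p.2.2 then (y i p.1 p.2.1).im else (y i p.1 p.2.1).re with hw
    have hentry : ∀ i j, (1/2 : ℝ) * Zw y i j = ∑ p, w i p * w j p := by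
      intro i j
      have h1 : Zw y i j / 2 = ∑ a, ∑ b, ((y i a b).re * (y j a b).re
          + (y i a b).im * (y j a b).im) := by
        rw [← re_trace_cy y i j]; exact re_trace_entry y hy i j
      rw [show (1/2:ℝ) * Zw y i j = Zw y i j / 2 by ring, h1]
      rw [Fintype.sum_prod_type]
      refine Finset.sum_congr rfl fun a _ => ?_
      rw [Fintype.sum_prod_type]
      refine Finset.sum_congr rfl fun b _ => ?_
      rw [Fintype.sum_bool]
      simp only [hw]
      norm_num
      ring
    have hM : (Matrix.of fun i j => (1/2 : ℝ) * Zw y i j)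
        = Matrix.of fun i j => ∑ p, w i p * w j p := by
      ext i j
      simp only [Matrix.of_apply]
      exact hentry i j
    rw [hM] at h
    obtain ⟨h0, hle⟩ := gram_eig_real w μ v hv h
    refine ⟨h0, ?_⟩
    have hbd : ∑ i, ∑ p, w i p * w i p = b0inv y / 2 := by
      rw [b0inv, Finset.sum_div]
      refine Finset.sum_congr rfl fun i _ => ?_
      rw [← hentry i i]; ring
    rw [hbd] at hle
    linarith
  · intro μ v hv h
    set B : Fin Nf → (Fin Ns × Fin Nf) → ℂ := fun a p => y p.1 a p.2 with hB
    have hM : (∑ i, y i * mconj (y i))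
        = Matrix.of fun a b => ∑ p, B a p * (starRingEnd ℂ) (B b p) := by
      ext a b
      simp only [Matrix.sum_apply, Matrix.mul_apply, Matrix.of_apply, mconj,
        Matrix.map_apply]
      rw [Fintype.sum_prod_type]
      refine Finset.sum_congr rfl fun i _ => Finset.sum_congr rfl fun k _ => ?_
      have hk : y i k b = y i b k := congrFun (congrFun (hy i) b) k
      rw [hk]
    have h2 : (Matrix.of fun a b => ∑ p, B a p * (starRingEnd ℂ) (B b p)).mulVec v
        = ((2:ℂ)*μ) • v := by
      rw [← hM]
      rw [Matrix.smul_mulVec] at h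
      calc (∑ i, y i * mconj (y i)).mulVec v
          = (2:ℂ) • ((1/2 : ℂ) • (∑ i, y i * mconj (y i)).mulVec v) := by
            rw [smul_smul]; norm_num
        _ = (2:ℂ) • (μ • v) := by rw [h]
        _ = ((2:ℂ)*μ) • v := by rw [smul_smul]
    obtain ⟨him, hre0, hrele⟩ := gram_eig_complex B ((2:ℂ)*μ) v hv h2
    have him2 : ((2:ℂ)*μ).im = 2 * μ.im := by simp [Complex.mul_im]
    have hre2 : ((2:ℂ)*μ).re = 2 * μ.re := by simp [Complex.mul_re]
    have hbd : ∑ a, ∑ p : Fin Ns × Fin Nf, Complex.normSq (B a p) = b0inv y / 2 := by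
      have hswap : ∑ a, ∑ p : Fin Ns × Fin Nf, Complex.normSq (B a p)
          = ∑ i, ∑ a, ∑ k, Complex.normSq (y i a k) := by
        have h1 : ∀ a : Fin Nf, ∑ p : Fin Ns × Fin Nf, Complex.normSq (B a p)
            = ∑ i, ∑ k, Complex.normSq (y i a k) := by
          intro a
          simp only [hB]
          exact Fintype.sum_prod_type _
        rw [Finset.sum_congr rfl fun a _ => h1 a]
        exact Finset.sum_comm
      rw [hswap, b0inv, Finset.sum_div]
      refine Finset.sum_congr rfl fun i _ => ?_
      have h1 : Zw y i i / 2 = ∑ a, ∑ b, ((y i a b).re * (y i a b).re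
          + (y i a b).im * (y i a b).im) := by
        rw [← re_trace_cy y i i]; exact re_trace_entry y hy i i
      rw [h1]
      exact Finset.sum_congr rfl fun a _ => Finset.sum_congr rfl fun b _ => by
        rw [Complex.normSq_apply]
    rw [hbd, hre2] at hrele
    rw [hre2] at hre0
    refine ⟨by linarith [him2 ▸ him], by linarith, by linarith⟩
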